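/- In the Weyl-group setting above, the linear map Ψ : ker(w + w^Δ) → ker(M), defined by Ψ(γ) = Σ_{h=1}^m ⟨(β^Δ_{j_h})∨, w^Δ(γ)⟩ e_h, is a linear isomorphism. In particular dim ker(M) = dim ker(w + w^Δ), where M is the m×m skew-symmetric matrix with M_{hℓ} = ⟨β_{j_h}, β_{j_ℓ}⟩ for h<ℓ. -/

import Mathlib

open scoped RealInnerProductSpace
def pref {V : Type*} [NormedAddCommGroup V] [InnerProductSpace ℝ V]
    (w s : ℕ → Module.End ℝ V) : ℕ → Module.End ℝ V
  | 0 => w 0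
  | ℓ + 1 => pref w s ℓ * s (ℓ + 1) * w (ℓ + 1)

/-- `plainPref w ℓ = w₀ w₁ ⋯ w_ℓ`. -/
def plainPref {V : Type*} [NormedAddCommGroup V] [InnerProductSpace ℝ V]
    (w : ℕ → Module.End ℝ V) : ℕ → Module.End ℝ V
  | 0 => w 0
  | ℓ + 1 => plainPref w ℓ * w (ℓ + 1)

/-- `suff w m ℓ = w_ℓ w_{ℓ+1} ⋯ w_m`. -/
def suff {V : Type*} [NormedAddCommGroup V] [InnerProductSpace ℝ V]
    (w : ℕ → Module.End ℝ V) (m ℓ : ℕ) : Module.End ℝ V :=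
  ((List.range (m + 1 - ℓ)).map fun i => w (ℓ + i)).prod

/-- `uop w s m ℓ = w₀ s₁ w₁ ⋯ w_{ℓ-1} (s_ℓ - id) w_ℓ ⋯ w_m`. -/
def uop {V : Type*} [NormedAddCommGroup V] [InnerProductSpace ℝ V]
    (w s : ℕ → Module.End ℝ V) (m ℓ : ℕ) : Module.End ℝ V :=
  pref w s (ℓ - 1) * (s ℓ - 1) * suff w m ℓ

/-- `vop w s m ℓ = w₀ s₁ w₁ ⋯ w_{ℓ-1} (s_ℓ + id) w_ℓ ⋯ w_m`. -/
def vop {V : Type*} [NormedAddCommGroup V] [InnerProductSpace ℝ V]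
    (w s : ℕ → Module.End ℝ V) (m ℓ : ℕ) : Module.End ℝ V :=
  pref w s (ℓ - 1) * (s ℓ + 1) * suff w m ℓ

/-- `β_{j_ℓ} = w₀ s₁ w₁ ⋯ s_{ℓ-1} w_{ℓ-1} (α_{j_ℓ})`. -/
def betaV {V : Type*} [NormedAddCommGroup V] [InnerProductSpace ℝ V]
    (w s : ℕ → Module.End ℝ V) (α : ℕ → V) (ℓ : ℕ) : V :=
  pref w s (ℓ - 1) (α ℓ)

/-- `β^Δ_{j_ℓ} = w₀ w₁ ⋯ w_{ℓ-1} (α_{j_ℓ})`. -/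
def betaD {V : Type*} [NormedAddCommGroup V] [InnerProductSpace ℝ V]
    (w : ℕ → Module.End ℝ V) (α : ℕ → V) (ℓ : ℕ) : V :=
  plainPref w (ℓ - 1) (α ℓ)

/-- `⟨(β^Δ_{j_ℓ})∨, w^Δ(γ)⟩` where `β∨ = (2/⟨β,β⟩)β`. -/
noncomputable def coeffc {V : Type*} [NormedAddCommGroup V] [InnerProductSpace ℝ V]
    (w s : ℕ → Module.End ℝ V) (α : ℕ → V) (m : ℕ) (γ : V) (ℓ : ℕ) : ℝ :=
  (2 / ⟪betaD w α ℓ, betaD w α ℓ⟫) * ⟪betaD w α ℓ, plainPref w m γ⟫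

/-!
Write `X c = ∑ₖ cₖ βₖ` and `L v = (⟨(β^Δ_k)∨, v⟩)ₖ`. Peeling off the reflections one at a time gives
`w = w^Δ - X L w^Δ`, so `w^Δ` maps `ker (w + w^Δ)` onto the `2`-eigenspace of `X L`, which `L` maps
isomorphically (with inverse `X / 2`) onto the `2`-eigenspace of `L X`. On the other side, the
triangular relation `β_h = β^Δ_h + ∑_{k<h} ⟨β_k∨, β_h⟩ β^Δ_k` says `A L v = (⟨β_h, v⟩)_h`, where `A`
is the lower triangle of the Gram matrix of the `β`'s with halved diagonal. Since `M = Aᵀ - A` and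
`A + Aᵀ` is the Gram matrix, this gives `M = A (L X - 2)`, and `A` is invertible.
-/

open Finset Matrix Module.End

section EigenspaceComp
variable {K E F : Type*} [Field K] [AddCommGroup E] [Module K E] [AddCommGroup F] [Module K F]

def eigenspaceCompEquiv (f : E →ₗ[K] F) (g : F →ₗ[K] E) {μ : K} (hμ : μ ≠ 0) :
    eigenspace (g ∘ₗ f) μ ≃ₗ[K] eigenspace (f ∘ₗ g) μ where
  toFun x := ⟨f x, mem_eigenspace_iff.mpr <| by
    rw [LinearMap.comp_apply, ← LinearMap.comp_apply g f, mem_eigenspace_iff.mp x.2, map_smul]⟩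
  invFun y := ⟨μ⁻¹ • g y, mem_eigenspace_iff.mpr <| by
    rw [map_smul, LinearMap.comp_apply, ← LinearMap.comp_apply f g, mem_eigenspace_iff.mp y.2,
      map_smul, smul_comm]⟩
  map_add' x y := by ext; simp
  map_smul' c x := by ext; simp
  left_inv x := by
    ext
    simp [← LinearMap.comp_apply g f, mem_eigenspace_iff.mp x.2, hμ]
  right_inv y := by
    ext
    simp [← LinearMap.comp_apply f g, mem_eigenspace_iff.mp y.2, hμ]

end EigenspaceComp

section Gram
variable {ι V : Type*} [Fintype ι] [LinearOrder ι] [NormedAddCommGroup V] [InnerProductSpace ℝ V]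

noncomputable def corootPairing (b : ι → V) : V →ₗ[ℝ] ι → ℝ :=
  LinearMap.pi fun k => (2 / ⟪b k, b k⟫) • innerₛₗ ℝ (b k)

omit [Fintype ι] [LinearOrder ι] in
lemma corootPairing_apply (b : ι → V) (v : V) (k : ι) :
    corootPairing b v k = 2 / ⟪b k, b k⟫ * ⟪b k, v⟫ := rfl

noncomputable def lowerHalfGram [DecidableEq ι] (β : ι → V) : Matrix ι ι ℝ :=
  Matrix.of (fun h k => if k < h then ⟪β k, β h⟫ else 0) + Matrix.diagonal fun h => ⟪β h, β h⟫ / 2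

variable [DecidableEq ι]

lemma lowerHalfGram_mulVec (β : ι → V) (c : ι → ℝ) (h : ι) :
    (lowerHalfGram β *ᵥ c) h = ∑ k with k < h, ⟪β k, β h⟫ * c k + ⟪β h, β h⟫ / 2 * c h := by
  simp only [lowerHalfGram, add_mulVec, mulVec_diagonal, Pi.add_apply]
  simp [mulVec, dotProduct, ite_mul, sum_filter]

lemma isUnit_lowerHalfGram {β : ι → V} (hne : ∀ k, ⟪β k, β k⟫ ≠ 0) : IsUnit (lowerHalfGram β) := by
  rw [Matrix.isUnit_iff_isUnit_det, Matrix.det_of_isLowerTriangular, isUnit_iff_ne_zero]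
  · simpa [lowerHalfGram, Finset.prod_ne_zero_iff] using hne
  · intro i j (hij : i < j)
    simp [lowerHalfGram, hij.ne, hij.not_gt]

omit [Fintype ι] in
lemma lowerHalfGram_add_transpose (β : ι → V) :
    lowerHalfGram β + (lowerHalfGram β)ᵀ = Matrix.gram ℝ β := by
  ext h k
  simp only [lowerHalfGram, Matrix.add_apply, Matrix.transpose_apply, Matrix.of_apply,
    Matrix.diagonal_apply, Matrix.gram_apply]
  rcases lt_trichotomy h k with hk | rfl | hk
  · simp [hk, hk.ne, hk.ne', hk.not_gt]
  · simp
  · simp [hk, hk.ne, hk.ne', hk.not_gt, real_inner_comm]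

omit [Fintype ι] in
lemma eq_transpose_sub_lowerHalfGram {β : ι → V} {M : Matrix ι ι ℝ}
    (hM : ∀ i l, M i l = if i < l then ⟪β i, β l⟫ else if l < i then -⟪β l, β i⟫ else 0) :
    M = (lowerHalfGram β)ᵀ - lowerHalfGram β := by
  ext h k
  simp only [hM, lowerHalfGram, Matrix.sub_apply, Matrix.add_apply, Matrix.transpose_apply,
    Matrix.of_apply, Matrix.diagonal_apply]
  rcases lt_trichotomy h k with hk | rfl | hk
  · simp [hk, hk.ne, hk.ne', hk.not_gt]
  · simp
  · simp [hk, hk.ne, hk.ne', hk.not_gt]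

lemma lowerHalfGram_mulVec_corootPairing {β βΔ : ι → V} (hnorm : ∀ k, ⟪βΔ k, βΔ k⟫ = ⟪β k, β k⟫)
    (hne : ∀ k, ⟪β k, β k⟫ ≠ 0)
    (htri : ∀ h, β h = βΔ h + ∑ k with k < h, (2 / ⟪β k, β k⟫ * ⟪β k, β h⟫) • βΔ k) (v : V) :
    lowerHalfGram β *ᵥ corootPairing βΔ v = fun h => ⟪β h, v⟫ := by
  ext h
  have hpair : ⟪β h, v⟫ = ⟪βΔ h, v⟫ + ∑ k with k < h, 2 / ⟪β k, β k⟫ * ⟪β k, β h⟫ * ⟪βΔ k, v⟫ := by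
    conv_lhs => rw [htri h]
    simp only [inner_add_left, sum_inner, real_inner_smul_left]
  rw [lowerHalfGram_mulVec, hpair, add_comm]
  simp only [corootPairing_apply, hnorm]
  congr 1
  · field_simp
    exact mul_div_cancel_left₀ _ (hne h)
  · exact sum_congr rfl fun k _ => by field_simp [hne k]

theorem ker_mulVecLin_eq_eigenspace {β βΔ : ι → V} (hnorm : ∀ k, ⟪βΔ k, βΔ k⟫ = ⟪β k, β k⟫)
    (hne : ∀ k, ⟪β k, β k⟫ ≠ 0)
    (htri : ∀ h, β h = βΔ h + ∑ k with k < h, (2 / ⟪β k, β k⟫ * ⟪β k, β h⟫) • βΔ k)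
    {M : Matrix ι ι ℝ}
    (hM : ∀ i l, M i l = if i < l then ⟪β i, β l⟫ else if l < i then -⟪β l, β i⟫ else 0) :
    LinearMap.ker M.mulVecLin =
      eigenspace (corootPairing βΔ ∘ₗ Fintype.linearCombination ℝ β) 2 := by
  have hfactor : M.mulVecLin = (lowerHalfGram β).mulVecLin ∘ₗ
      (corootPairing βΔ ∘ₗ Fintype.linearCombination ℝ β - (2 : ℝ) • 1) := by
    refine LinearMap.ext fun c => ?_
    have hgram : lowerHalfGram β *ᵥ corootPairing βΔ (Fintype.linearCombination ℝ β c) =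
        (lowerHalfGram β + (lowerHalfGram β)ᵀ) *ᵥ c := by
      rw [lowerHalfGram_mulVec_corootPairing hnorm hne htri, lowerHalfGram_add_transpose]
      ext h
      simp [Matrix.mulVec, dotProduct, Fintype.linearCombination_apply, inner_sum,
        real_inner_smul_right, mul_comm]
    simp only [LinearMap.comp_apply, LinearMap.sub_apply, LinearMap.smul_apply,
      Module.End.one_apply, mulVecLin_apply]
    rw [mulVec_sub, hgram, mulVec_smul, eq_transpose_sub_lowerHalfGram hM, add_mulVec, sub_mulVec,
      two_smul]
    abel
  rw [eigenspace_def, hfactor, LinearMap.ker_comp_of_ker_eq_bot]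
  rw [LinearMap.ker_eq_bot, Matrix.coe_mulVecLin, Matrix.mulVec_injective_iff_isUnit]
  exact isUnit_lowerHalfGram hne

end Gram

lemma Fin.sum_filter_lt_eq_sum_range {A : Type*} [AddCommMonoid A] {m : ℕ} (h : Fin m) (g : ℕ → A) :
    ∑ k : Fin m with k < h, g k = ∑ k ∈ range h, g k := by
  rw [filter_gt_eq_Iio, ← Nat.Iio_eq_range, ← Fin.map_valEmbedding_Iio, sum_map]
  rfl

section Weyl
variable {V : Type*} [NormedAddCommGroup V] [InnerProductSpace ℝ V]
  {w s : ℕ → Module.End ℝ V} {α : ℕ → V}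

lemma pref_succ_apply (h : ℕ) (x : V) : pref w s (h + 1) x = pref w s h (s (h + 1) (w (h + 1) x)) :=
  rfl

lemma plainPref_succ_apply (h : ℕ) (x : V) : plainPref w (h + 1) x = plainPref w h (w (h + 1) x) :=
  rfl

lemma betaV_succ (k : ℕ) : betaV w s α (k + 1) = pref w s k (α (k + 1)) := rfl

lemma betaD_succ (k : ℕ) : betaD w α (k + 1) = plainPref w k (α (k + 1)) := rfl

lemma inner_map_map_of_reflection {a : V} (ha : a ≠ 0) {r : Module.End ℝ V}
    (hr : ∀ v, r v = v - (2 * ⟪a, v⟫ / ⟪a, a⟫) • a) (x y : V) : ⟪r x, r y⟫ = ⟪x, y⟫ := by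
  have ha' : ⟪a, a⟫ ≠ 0 := inner_self_ne_zero.mpr ha
  simp only [hr, inner_sub_left, inner_sub_right, real_inner_smul_left, real_inner_smul_right,
    real_inner_comm x a]
  field_simp
  ring

lemma inner_plainPref_plainPref (hw : ∀ i (x y : V), ⟪w i x, w i y⟫ = ⟪x, y⟫) (h : ℕ) (x y : V) :
    ⟪plainPref w h x, plainPref w h y⟫ = ⟪x, y⟫ := by
  induction h generalizing x y with
  | zero => exact hw 0 x y
  | succ h ih => simp only [plainPref, Module.End.mul_apply, ih, hw]

lemma inner_pref_pref (hα : ∀ ℓ, α ℓ ≠ 0) (hw : ∀ i (x y : V), ⟪w i x, w i y⟫ = ⟪x, y⟫)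
    (hs : ∀ ℓ (v : V), s ℓ v = v - ((2 * ⟪α ℓ, v⟫) / ⟪α ℓ, α ℓ⟫) • α ℓ) (h : ℕ) (x y : V) :
    ⟪pref w s h x, pref w s h y⟫ = ⟪x, y⟫ := by
  induction h generalizing x y with
  | zero => exact hw 0 x y
  | succ h ih =>
    simp only [pref, Module.End.mul_apply, ih, inner_map_map_of_reflection (hα _) (hs _), hw]

lemma pref_apply_eq_sub (hw : ∀ i (x y : V), ⟪w i x, w i y⟫ = ⟪x, y⟫)
    (hs : ∀ ℓ (v : V), s ℓ v = v - ((2 * ⟪α ℓ, v⟫) / ⟪α ℓ, α ℓ⟫) • α ℓ) (h : ℕ) (y : V) :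
    pref w s h y = plainPref w h y -
      ∑ k ∈ range h, coeffc w s α h y (k + 1) • betaV w s α (k + 1) := by
  induction h generalizing y with
  | zero => simp [pref, plainPref]
  | succ h ih =>
    have hcoeff : 2 * ⟪α (h + 1), w (h + 1) y⟫ / ⟪α (h + 1), α (h + 1)⟫ =
        coeffc w s α (h + 1) y (h + 1) := by
      rw [coeffc, betaD_succ, plainPref_succ_apply, inner_plainPref_plainPref hw,
        inner_plainPref_plainPref hw]
      ring
    rw [pref_succ_apply, hs, map_sub, map_smul, ih, sum_range_succ, hcoeff, betaV_succ,
      plainPref_succ_apply]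
    simp only [coeffc, plainPref_succ_apply]
    abel

lemma pref_apply_eq_add (hα : ∀ ℓ, α ℓ ≠ 0) (hw : ∀ i (x y : V), ⟪w i x, w i y⟫ = ⟪x, y⟫)
    (hs : ∀ ℓ (v : V), s ℓ v = v - ((2 * ⟪α ℓ, v⟫) / ⟪α ℓ, α ℓ⟫) • α ℓ) (h : ℕ) (y : V) :
    pref w s h y = plainPref w h y + ∑ k ∈ range h,
      (2 / ⟪betaV w s α (k + 1), betaV w s α (k + 1)⟫ * ⟪betaV w s α (k + 1), pref w s h y⟫) •
        betaD w α (k + 1) := by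
  induction h generalizing y with
  | zero => simp [pref, plainPref]
  | succ h ih =>
    have hne : ⟪α (h + 1), α (h + 1)⟫ ≠ 0 := inner_self_ne_zero.mpr (hα _)
    have hcoeff : 2 / ⟪betaV w s α (h + 1), betaV w s α (h + 1)⟫ *
        ⟪betaV w s α (h + 1), pref w s (h + 1) y⟫ =
          -(2 * ⟪α (h + 1), w (h + 1) y⟫ / ⟪α (h + 1), α (h + 1)⟫) := by
      rw [betaV_succ, pref_succ_apply, inner_pref_pref hα hw hs, inner_pref_pref hα hw hs, hs,
        inner_sub_right, real_inner_smul_right]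
      field_simp
      ring
    rw [sum_range_succ, hcoeff]
    conv_lhs => rw [pref_succ_apply, ih]
    rw [← pref_succ_apply, hs, map_sub, map_smul, ← plainPref_succ_apply, betaD_succ]
    module

variable {m : ℕ}

lemma betaV_eq_add (hα : ∀ ℓ, α ℓ ≠ 0) (hw : ∀ i (x y : V), ⟪w i x, w i y⟫ = ⟪x, y⟫)
    (hs : ∀ ℓ (v : V), s ℓ v = v - ((2 * ⟪α ℓ, v⟫) / ⟪α ℓ, α ℓ⟫) • α ℓ) (h : Fin m) :
    betaV w s α (h + 1) = betaD w α (h + 1) + ∑ k : Fin m with k < h,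
      (2 / ⟪betaV w s α (k + 1), betaV w s α (k + 1)⟫ *
        ⟪betaV w s α (k + 1), betaV w s α (h + 1)⟫) • betaD w α (k + 1) := by
  refine (pref_apply_eq_add hα hw hs h (α (h + 1))).trans ?_
  rw [← Fin.sum_filter_lt_eq_sum_range]
  rfl

lemma pref_eq_sub_comp (hw : ∀ i (x y : V), ⟪w i x, w i y⟫ = ⟪x, y⟫)
    (hs : ∀ ℓ (v : V), s ℓ v = v - ((2 * ⟪α ℓ, v⟫) / ⟪α ℓ, α ℓ⟫) • α ℓ) :
    pref w s m = plainPref w m -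
      Fintype.linearCombination ℝ (fun k : Fin m => betaV w s α (k + 1)) ∘ₗ
        corootPairing (fun k : Fin m => betaD w α (k + 1)) ∘ₗ plainPref w m := by
  refine LinearMap.ext fun y => ?_
  rw [pref_apply_eq_sub hw hs, ← Fin.sum_univ_eq_sum_range]
  rfl

lemma ker_pref_add_plainPref (hw : ∀ i (x y : V), ⟪w i x, w i y⟫ = ⟪x, y⟫)
    (hs : ∀ ℓ (v : V), s ℓ v = v - ((2 * ⟪α ℓ, v⟫) / ⟪α ℓ, α ℓ⟫) • α ℓ) :
    LinearMap.ker (pref w s m + plainPref w m) =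
      (eigenspace (Fintype.linearCombination ℝ (fun k : Fin m => betaV w s α (k + 1)) ∘ₗ
        corootPairing (fun k : Fin m => betaD w α (k + 1))) 2).comap (plainPref w m) := by
  ext γ
  rw [Submodule.mem_comap, mem_eigenspace_iff, LinearMap.mem_ker, pref_eq_sub_comp hw hs]
  simp only [LinearMap.add_apply, LinearMap.sub_apply, LinearMap.comp_apply]
  rw [sub_add_eq_add_sub, sub_eq_zero, ← two_smul ℝ, eq_comm]

end Weyl

theorem Psi_isomorphism
    {V : Type*} [NormedAddCommGroup V] [InnerProductSpace ℝ V] [FiniteDimensional ℝ V]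
    (m : ℕ) (w s : ℕ → Module.End ℝ V) (α : ℕ → V)
    (hα : ∀ ℓ, α ℓ ≠ 0)
    (hw : ∀ i (x y : V), ⟪w i x, w i y⟫ = ⟪x, y⟫)
    (hs : ∀ ℓ (v : V), s ℓ v = v - ((2 * ⟪α ℓ, v⟫) / ⟪α ℓ, α ℓ⟫) • α ℓ)
    (M : Matrix (Fin m) (Fin m) ℝ)
    (hM : ∀ i l : Fin m, M i l =
      if i < l then ⟪betaV w s α (↑i + 1), betaV w s α (↑l + 1)⟫
      else if l < i then -⟪betaV w s α (↑l + 1), betaV w s α (↑i + 1)⟫ else 0) :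
    (∃ e : LinearMap.ker (pref w s m + plainPref w m) ≃ₗ[ℝ] LinearMap.ker M.mulVecLin,
        ∀ γ : LinearMap.ker (pref w s m + plainPref w m),
          (e γ : Fin m → ℝ) = fun h : Fin m => coeffc w s α m (γ : V) (↑h + 1)) ∧
      Module.finrank ℝ (LinearMap.ker M.mulVecLin) =
        Module.finrank ℝ (LinearMap.ker (pref w s m + plainPref w m)) := by
  have hnorm (k : Fin m) : ⟪betaD w α (k + 1), betaD w α (k + 1)⟫ =
      ⟪betaV w s α (k + 1), betaV w s α (k + 1)⟫ := by
    rw [betaD_succ, betaV_succ, inner_plainPref_plainPref hw, inner_pref_pref hα hw hs]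
  have hne (k : Fin m) : ⟪betaV w s α (k + 1), betaV w s α (k + 1)⟫ ≠ 0 := by
    rw [betaV_succ, inner_pref_pref hα hw hs]
    exact inner_self_ne_zero.mpr (hα _)
  have hP : Function.Injective (plainPref w m) :=
    ((plainPref w m).isometryOfInner (inner_plainPref_plainPref hw m)).injective
  let P := LinearEquiv.ofInjectiveEndo _ hP
  let e := (LinearEquiv.ofEq _ _ (ker_pref_add_plainPref hw hs)).trans <|
    (P.ofSubmodules _ _ (Submodule.map_comap_eq_of_surjective P.surjective _)).trans <|
    (eigenspaceCompEquiv _ _ two_ne_zero).trans <|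
    LinearEquiv.ofEq _ _ (ker_mulVecLin_eq_eigenspace hnorm hne (betaV_eq_add hα hw hs) hM).symm
  exact ⟨⟨e, fun γ => rfl⟩, e.finrank_eq.symm⟩
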